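/- arXiv:1801.03348 — 3 statements merged into one kernel-verified Lean document; each statement's English description precedes it below -/
import Mathlib

section
/- Let Γ be a circle with n marked points in cyclic order partitioning it into n arcs, with side disks ω₁, ..., ω_n labeled in cyclic order. Suppose ω_i and ω_j intersect (i ≠ j). Then every side disk whose arc lies strictly between arc i and arc j (in clockwise order) is disjoint from every side disk whose arc lies strictly between arc j and arc i. -/
open EuclideanGeometry Metric Real

/-- The point at angle `θ` on the circle centered at `O` with radius `r`
in the Euclidean plane. -/
noncomputable def circlePt (O : EuclideanSpace ℝ (Fin 2)) (r θ : ℝ) :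
    EuclideanSpace ℝ (Fin 2) :=
  O + r • (WithLp.equiv 2 (Fin 2 → ℝ)).symm ![Real.cos θ, Real.sin θ]

/-- The side disk of the arc from angle `a` to angle `b` (traversed in increasing angle)
of the circle centered at `O` with radius `r`: the closed disk centered at the midpoint
of the arc whose boundary passes through the two endpoints of the arc. -/
noncomputable def sideDisk (O : EuclideanSpace ℝ (Fin 2)) (r a b : ℝ) :
    Set (EuclideanSpace ℝ (Fin 2)) :=
  Metric.closedBall (circlePt O r ((a + b) / 2))
    (dist (circlePt O r ((a + b) / 2)) (circlePt O r a))

/-!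
Write the arcs `i, k, j, l` as having angular lengths `4a, 4p, 4b, 4q`, so `a + b + p + q ≤ π/2`.
The side disk of an arc of length `4a` has radius `2r sin a`, and the centres of the disks of
arcs `i` and `j` are at distance `2r sin y`, where `a + b + 2p ≤ y ≤ π - (a + b + 2q)`. Hence
if these disks meet, `sin y ≤ sin a + sin b`, and by concavity of `sin` the same holds with `y`
replaced by `a + b + 2p` or by `a + b + 2q`. Via `sin (a + b + 2p) - sin (a + b) =
2 sin p cos (a + b + p) ≥ 2 sin p sin q` and `sin a + sin b - sin (a + b) < 2 sin a sin b`, this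
forces `sin p sin q < sin a sin b`. The same argument for arcs `k` and `l` gives the reverse
strict inequality.
-/

lemma one_sub_cos_lt_sin {x : ℝ} (hx₀ : 0 < x) (hx : x < π / 2) : 1 - cos x < sin x := by
  have hs := sin_pos_of_pos_of_lt_pi hx₀ (by linarith)
  have hc := cos_pos_of_mem_Ioo ⟨by linarith, hx⟩
  nlinarith [sin_sq_add_cos_sq x, mul_pos hs hc]

lemma sin_add_sin_sub_sin_add_lt {a b : ℝ} (ha₀ : 0 < a) (ha : a < π / 2) (hb₀ : 0 < b)
    (hb : b < π / 2) : sin a + sin b - sin (a + b) < 2 * sin a * sin b := by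
  have hsa := sin_pos_of_pos_of_lt_pi ha₀ (by linarith)
  have hsb := sin_pos_of_pos_of_lt_pi hb₀ (by linarith)
  rw [sin_add]
  nlinarith [mul_lt_mul_of_pos_left (one_sub_cos_lt_sin hb₀ hb) hsa,
    mul_lt_mul_of_pos_left (one_sub_cos_lt_sin ha₀ ha) hsb]

lemma sin_mul_sin_lt_of_sin_add_two_mul_le {a b p q : ℝ} (ha : 0 < a) (hb : 0 < b) (hp : 0 < p)
    (hq : 0 < q) (hsum : a + b + p + q ≤ π / 2) (h : sin (a + b + 2 * p) ≤ sin a + sin b) :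
    sin p * sin q < sin a * sin b := by
  have hsp : 0 < sin p := sin_pos_of_pos_of_lt_pi hp (by linarith)
  have hsq : sin q ≤ cos (a + b + p) := by
    rw [← sin_pi_div_two_sub]
    exact sin_le_sin_of_le_of_le_pi_div_two (by linarith) (by linarith) (by linarith)
  have hshift : 2 * sin p * cos (a + b + p) = sin (a + b + 2 * p) - sin (a + b) := by
    rw [two_mul_sin_mul_cos, show p - (a + b + p) = -(a + b) by ring, sin_neg]
    ring_nf
  calc sin p * sin q ≤ sin p * cos (a + b + p) := mul_le_mul_of_nonneg_left hsq hsp.le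
    _ ≤ (sin a + sin b - sin (a + b)) / 2 := by linarith
    _ < sin a * sin b := by
      linarith [sin_add_sin_sub_sin_add_lt ha (by linarith) hb (by linarith)]

lemma sin_mul_sin_lt_of_sin_le_add {a b p q y : ℝ} (ha : 0 < a) (hb : 0 < b) (hp : 0 < p)
    (hq : 0 < q) (hy₁ : a + b + 2 * p ≤ y)
    (hy₂ : y + (a + b + 2 * q) ≤ π) (h : sin y ≤ sin a + sin b) :
    sin p * sin q < sin a * sin b := by
  have hmin := strictConcaveOn_sin_Icc.concaveOn.min_le_of_mem_Icc
    (x := a + b + 2 * p) (y := π - (a + b + 2 * q)) ⟨by linarith, by linarith⟩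
    ⟨by linarith, by linarith⟩ ⟨hy₁, by linarith⟩
  rw [sin_pi_sub] at hmin
  rcases min_le_iff.1 (hmin.trans h) with h' | h'
  · exact sin_mul_sin_lt_of_sin_add_two_mul_le ha hb hp hq (by linarith) h'
  · rw [mul_comm]
    exact sin_mul_sin_lt_of_sin_add_two_mul_le ha hb hq hp (by linarith) h'

lemma dist_circlePt (O : EuclideanSpace ℝ (Fin 2)) {r : ℝ} (hr : 0 ≤ r) (α β : ℝ) :
    dist (circlePt O r α) (circlePt O r β) = 2 * r * |sin ((α - β) / 2)| := by
  rw [EuclideanSpace.dist_eq, Fin.sum_univ_two,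
    ← Real.sqrt_sq (by positivity : 0 ≤ 2 * r * |sin ((α - β) / 2)|)]
  congr 1
  simp only [circlePt, Real.dist_eq, sq_abs, WithLp.equiv_symm_apply, PiLp.add_apply,
    PiLp.smul_apply, Matrix.cons_val_zero, Matrix.cons_val_one, Matrix.cons_val_fin_one,
    smul_eq_mul, add_sub_add_left_eq_sub]
  have hdouble := cos_two_mul' ((α - β) / 2)
  rw [mul_div_cancel₀ _ two_ne_zero] at hdouble
  rw [mul_pow, mul_pow, sq_abs]
  linear_combination r ^ 2 * sin_sq_add_cos_sq α + r ^ 2 * sin_sq_add_cos_sq β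
    + 2 * r ^ 2 * cos_sub α β - 2 * r ^ 2 * hdouble - 2 * r ^ 2 * cos_sq_add_sin_sq ((α - β) / 2)

lemma sideDisk_eq_closedBall (O : EuclideanSpace ℝ (Fin 2)) {r a b : ℝ} (hr : 0 ≤ r)
    (hab : a ≤ b) (hba : b ≤ a + 4 * π) :
    sideDisk O r a b = closedBall (circlePt O r ((a + b) / 2)) (2 * r * sin ((b - a) / 4)) := by
  rw [sideDisk, dist_circlePt O hr, show ((a + b) / 2 - a) / 2 = (b - a) / 4 by ring,
    abs_of_nonneg (sin_nonneg_of_nonneg_of_le_pi (by linarith) (by linarith))]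

lemma sin_le_sin_add_sin_of_sideDisk_inter_nonempty {O : EuclideanSpace ℝ (Fin 2)} {r A B C D : ℝ}
    (hr : 0 < r) (hAB : A ≤ B) (hBC : B ≤ C) (hCD : C ≤ D) (hDA : D ≤ A + 2 * π)
    (h : (sideDisk O r A B ∩ sideDisk O r C D).Nonempty) :
    sin ((C + D - A - B) / 4) ≤ sin ((B - A) / 4) + sin ((D - C) / 4) := by
  rw [sideDisk_eq_closedBall O hr.le hAB (by linarith),
    sideDisk_eq_closedBall O hr.le hCD (by linarith)] at h
  have hdist := dist_le_add_of_nonempty_closedBall_inter_closedBall h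
  rw [dist_comm, dist_circlePt O hr.le,
    show ((C + D) / 2 - (A + B) / 2) / 2 = (C + D - A - B) / 4 by ring,
    abs_of_nonneg (sin_nonneg_of_nonneg_of_le_pi (by linarith) (by linarith)), ← mul_add] at hdist
  exact le_of_mul_le_mul_left hdist (by positivity)

theorem stmt_9_general (O : EuclideanSpace ℝ (Fin 2)) (r : ℝ) (hr : 0 < r)
    (n : ℕ) (θ : ℕ → ℝ) (hmono : StrictMono θ)
    (hper : ∀ m, θ (m + n) = θ m + 2 * π)
    (i k j l : ℕ) (hik : i < k) (hkj : k < j) (hjl : j < l) (hli : l < i + n)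
    (hij : (sideDisk O r (θ i) (θ (i + 1)) ∩ sideDisk O r (θ j) (θ (j + 1))).Nonempty) :
    sideDisk O r (θ k) (θ (k + 1)) ∩ sideDisk O r (θ l) (θ (l + 1)) = ∅ := by
  have hle : ∀ {m m'}, m ≤ m' → θ m ≤ θ m' := fun h => hmono.monotone h
  have hθi := hmono (Nat.lt_add_one i)
  have hθk := hmono (Nat.lt_add_one k)
  have hθj := hmono (Nat.lt_add_one j)
  have hθl := hmono (Nat.lt_add_one l)
  have hik' := hle (show i + 1 ≤ k by omega)
  have hkj' := hle (show k + 1 ≤ j by omega)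
  have hjl' := hle (show j + 1 ≤ l by omega)
  have hli' := (hle (show l + 1 ≤ i + n by omega)).trans_eq (hper i)
  have hlk' := (hle (show l + 1 ≤ k + n by omega)).trans_eq (hper k)
  have hij' := sin_le_sin_add_sin_of_sideDisk_inter_nonempty hr (by linarith) (by linarith)
    (by linarith) (by linarith) hij
  have hpq := sin_mul_sin_lt_of_sin_le_add (p := (θ (k + 1) - θ k) / 4)
    (q := (θ (l + 1) - θ l) / 4) (by linarith) (by linarith) (by linarith)
    (by linarith) (by linarith) (by linarith) hij'
  refine Set.eq_empty_of_forall_notMem fun z hz => ?_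
  have hkl := sin_le_sin_add_sin_of_sideDisk_inter_nonempty hr (by linarith) (by linarith)
    (by linarith) (by linarith) ⟨z, hz⟩
  have hab := sin_mul_sin_lt_of_sin_le_add (p := (θ (j + 1) - θ j) / 4)
    (q := (θ (i + 1) - θ i) / 4) (by linarith) (by linarith) (by linarith)
    (by linarith) (by linarith) (by linarith) hkl
  linarith [mul_comm (sin ((θ (i + 1) - θ i) / 4)) (sin ((θ (j + 1) - θ j) / 4))]

/-- Marked points encoded as in the periodic-angle model. If the side disks of arcs `i`
and `j` intersect, then any side disk strictly between them on one side is disjoint from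
any side disk strictly between them on the other side. -/
theorem stmt_9 (O : EuclideanSpace ℝ (Fin 2)) (r : ℝ) (hr : 0 < r)
    (n : ℕ) (hn : 4 ≤ n) (θ : ℕ → ℝ) (hmono : StrictMono θ)
    (hper : ∀ m, θ (m + n) = θ m + 2 * π)
    (i k j l : ℕ) (hik : i < k) (hkj : k < j) (hjl : j < l) (hli : l < i + n)
    (hij : (sideDisk O r (θ i) (θ (i + 1)) ∩ sideDisk O r (θ j) (θ (j + 1))).Nonempty) :
    sideDisk O r (θ k) (θ (k + 1)) ∩ sideDisk O r (θ l) (θ (l + 1)) = ∅ :=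
  stmt_9_general O r hr n θ hmono hper i k j l hik hkj hjl hli hij
end

section
/- Let A, B, C, D be points in cyclic order on a circle, X = incenter of triangle ADC, Y = incenter of DCB, Z = incenter of CBA, T = incenter of BAD, and E the intersection of the diagonals XZ and YT of rectangle XYZT. Let F and H be the midpoints of arcs CD and AB respectively (arcs not containing the other points). Then E lies on the segment FH. -/
open EuclideanGeometry Metric Real

/-- `P` is the incenter of the triangle `ABC`: it lies on the internal angle bisector
lines from all three vertices (for a nondegenerate triangle these three lines meet
only at the incenter). -/
def IsIncenter (P A B C : EuclideanSpace ℝ (Fin 2)) : Prop :=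
  ∠ B A P = ∠ P A C ∧ ∠ C B P = ∠ P B A ∧ ∠ A C P = ∠ P C B

open scoped RealInnerProductSpace

/-!
Write `u θ` for the unit vector at angle `θ`, so the circle is `θ ↦ O + r • u θ`. The chord from
angle `p` to angle `q` is `2 r sin ((q - p) / 2) • u ((p + q) / 2 + π / 2)`; hence the bisector
condition at the vertex `A` at angle `α` of an inscribed triangle with other vertices at `β, γ`
says that `P - A` is orthogonal to `u ((2α + β + γ) / 4)`. Two such lines meet in one point,
which for `α < β < γ < α + 2π` is `O` plus the sum of the vectors from `O` to the midpoints of the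
three arcs, `O + r • (u ((α+β)/2) - u ((α+γ)/2) + u ((β+γ)/2))`.

Adding the formulas for `X` and `Z` and writing everything in the frame `u s, u (s + π/2)` with
`s = (a+b+c+d)/4`, `p = (c-a)/4`, `q = (d-b)/4`: the midpoint of `XZ` is
`O + r cos (p+q) • u s + r sin (p-q) • u (s + π/2)`, while `F` and `H` are the same point with
`sin (p-q)` replaced by `± sin (p+q)`. Since `p, q ∈ (0, π/2)`, `|sin (p-q)| ≤ sin (p+q)`.
-/

lemma inner_norm_smul_sub_norm_smul_eq_zero_of_angle_eq {V : Type*} [NormedAddCommGroup V]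
    [InnerProductSpace ℝ V] {x y v : V}
    (h : InnerProductGeometry.angle x v = InnerProductGeometry.angle v y) :
    ⟪‖y‖ • x - ‖x‖ • y, v⟫ = 0 := by
  rcases eq_or_ne x 0 with rfl | hx
  · simp
  rcases eq_or_ne y 0 with rfl | hy
  · simp
  rcases eq_or_ne v 0 with rfl | hv
  · simp
  have hcos := congrArg cos h
  rw [InnerProductGeometry.cos_angle, InnerProductGeometry.cos_angle, real_inner_comm y v,
    div_eq_div_iff (by positivity) (by positivity)] at hcos
  rw [inner_sub_left, inner_smul_left, inner_smul_left]
  apply mul_left_cancel₀ (norm_ne_zero_iff.mpr hv)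
  simp only [conj_trivial]
  linear_combination hcos

lemma add_smul_mem_segment_of_abs_le {E : Type*} [AddCommGroup E] [Module ℝ E] (m w : E)
    {σ τ : ℝ} (h : |τ| ≤ σ) : m + τ • w ∈ segment ℝ (m + σ • w) (m + (-σ) • w) := by
  have hτ : τ ∈ segment ℝ σ (-σ) := by
    rw [segment_eq_uIcc, Set.uIcc_of_ge (by linarith [abs_nonneg τ])]
    exact abs_le.mp h
  have := Set.mem_image_of_mem (AffineMap.lineMap m (m + w) : ℝ →ᵃ[ℝ] E) hτ
  rw [image_segment] at this
  simpa [AffineMap.lineMap_apply, smul_add, add_comm] using this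

lemma abs_sin_sub_le_sin_add {p q : ℝ} (hp₀ : 0 ≤ p) (hp : p ≤ π / 2) (hq₀ : 0 ≤ q)
    (hq : q ≤ π / 2) : |sin (p - q)| ≤ sin (p + q) := by
  have hsp := sin_nonneg_of_nonneg_of_le_pi hp₀ (by linarith)
  have hsq := sin_nonneg_of_nonneg_of_le_pi hq₀ (by linarith)
  have hcp := cos_nonneg_of_mem_Icc ⟨by linarith, hp⟩
  have hcq := cos_nonneg_of_mem_Icc ⟨by linarith, hq⟩
  rw [sin_sub, sin_add, abs_le]
  constructor <;> nlinarith [mul_nonneg hsp hcq, mul_nonneg hcp hsq]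

noncomputable def polarUnit (θ : ℝ) : EuclideanSpace ℝ (Fin 2) :=
  (WithLp.equiv 2 (Fin 2 → ℝ)).symm ![cos θ, sin θ]

@[simp] lemma polarUnit_apply_zero (θ : ℝ) : polarUnit θ 0 = cos θ := rfl
@[simp] lemma polarUnit_apply_one (θ : ℝ) : polarUnit θ 1 = sin θ := rfl

lemma circlePt_eq (O : EuclideanSpace ℝ (Fin 2)) (r θ : ℝ) :
    circlePt O r θ = O + r • polarUnit θ := rfl

lemma inner_polarUnit_polarUnit (x y : ℝ) : ⟪polarUnit x, polarUnit y⟫ = cos (x - y) := by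
  simp only [PiLp.inner_apply, RCLike.inner_apply, conj_trivial, Fin.sum_univ_two,
    polarUnit_apply_zero, polarUnit_apply_one, cos_sub]
  ring

lemma norm_polarUnit (θ : ℝ) : ‖polarUnit θ‖ = 1 := by
  rw [norm_eq_sqrt_real_inner, inner_polarUnit_polarUnit, sub_self, cos_zero, sqrt_one]

lemma polarUnit_add (x y : ℝ) :
    polarUnit (x + y) = cos y • polarUnit x + sin y • polarUnit (x + π / 2) := by
  ext i
  fin_cases i <;> simp only [Fin.zero_eta, Fin.mk_one, polarUnit_apply_zero, polarUnit_apply_one,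
    PiLp.add_apply, PiLp.smul_apply, smul_eq_mul, cos_add, sin_add, cos_pi_div_two,
    sin_pi_div_two] <;> ring

lemma polarUnit_add_pi (θ : ℝ) : polarUnit (θ + π) = -polarUnit θ := by
  ext i; fin_cases i <;> simp

lemma polarUnit_sub_polarUnit (p q : ℝ) :
    polarUnit q - polarUnit p = (2 * sin ((q - p) / 2)) • polarUnit ((p + q) / 2 + π / 2) := by
  have hq := polarUnit_add ((p + q) / 2) ((q - p) / 2)
  have hp := polarUnit_add ((p + q) / 2) (-((q - p) / 2))
  rw [show (p + q) / 2 + (q - p) / 2 = q by ring] at hq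
  rw [show (p + q) / 2 + -((q - p) / 2) = p by ring, cos_neg, sin_neg] at hp
  rw [hq, hp]
  module

lemma eq_zero_of_inner_polarUnit_eq_zero {v : EuclideanSpace ℝ (Fin 2)} {θ φ : ℝ}
    (hθ : ⟪polarUnit θ, v⟫ = 0) (hφ : ⟪polarUnit φ, v⟫ = 0) (h : sin (θ - φ) ≠ 0) : v = 0 := by
  simp only [PiLp.inner_apply, Fin.sum_univ_two, polarUnit_apply_zero, polarUnit_apply_one,
    RCLike.inner_apply, conj_trivial] at hθ hφ
  rw [sin_sub] at h
  ext i; fin_cases i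
  · exact (mul_eq_zero.mp (by linear_combination (sin θ) * hφ - (sin φ) * hθ :
      v 0 * (sin θ * cos φ - cos θ * sin φ) = 0)).resolve_right h
  · exact (mul_eq_zero.mp (by linear_combination (cos φ) * hθ - (cos θ) * hφ :
      v 1 * (sin θ * cos φ - cos θ * sin φ) = 0)).resolve_right h

lemma circlePt_sub_circlePt (O : EuclideanSpace ℝ (Fin 2)) (r p q : ℝ) :
    circlePt O r q - circlePt O r p =
      (2 * r * sin ((q - p) / 2)) • polarUnit ((p + q) / 2 + π / 2) := by
  rw [circlePt_eq, circlePt_eq, add_sub_add_left_eq_sub, ← smul_sub, polarUnit_sub_polarUnit,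
    smul_smul, ← mul_assoc, mul_comm r 2]

lemma inner_polarUnit_sub_circlePt_eq_zero_of_angle_eq {O X : EuclideanSpace ℝ (Fin 2)}
    {r α β γ : ℝ} (hr : 0 < r) (hsign : 0 < sin ((β - α) / 2) * sin ((γ - α) / 2))
    (hβγ : sin ((β - γ) / 4) ≠ 0)
    (h : ∠ (circlePt O r β) (circlePt O r α) X = ∠ X (circlePt O r α) (circlePt O r γ)) :
    ⟪polarUnit ((2 * α + β + γ) / 4), X - circlePt O r α⟫ = 0 := by
  set sB := sin ((β - α) / 2) with hsB
  set sC := sin ((γ - α) / 2) with hsC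
  have key := inner_norm_smul_sub_norm_smul_eq_zero_of_angle_eq h
  simp only [vsub_eq_sub] at key
  have habs : |sC| * sB = |sB| * sC := by
    rcases lt_or_gt_of_ne (left_ne_zero_of_mul hsign.ne') with hB | hB
    · rw [abs_of_neg hB, abs_of_neg (neg_of_mul_pos_right hsign hB.le)]; ring
    · rw [abs_of_pos hB, abs_of_pos (pos_of_mul_pos_right hsign hB.le)]; ring
  have hdiff : polarUnit ((α + β) / 2 + π / 2) - polarUnit ((α + γ) / 2 + π / 2) =
      -(2 * sin ((β - γ) / 4)) • polarUnit ((2 * α + β + γ) / 4) := by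
    rw [polarUnit_sub_polarUnit, show ((α + β) / 2 + π / 2 - ((α + γ) / 2 + π / 2)) / 2 =
      (β - γ) / 4 by ring, show ((α + γ) / 2 + π / 2 + ((α + β) / 2 + π / 2)) / 2 + π / 2 =
      (2 * α + β + γ) / 4 + π by ring, polarUnit_add_pi, smul_neg, neg_smul]
  have hn : ‖circlePt O r γ - circlePt O r α‖ • (circlePt O r β - circlePt O r α) -
      ‖circlePt O r β - circlePt O r α‖ • (circlePt O r γ - circlePt O r α) =
      (-(8 * r ^ 2 * |sC| * sB * sin ((β - γ) / 4))) • polarUnit ((2 * α + β + γ) / 4) := by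
    simp only [circlePt_sub_circlePt, norm_smul, norm_polarUnit, Real.norm_eq_abs, abs_mul,
      abs_two, abs_of_pos hr, mul_one, ← hsB, ← hsC]
    linear_combination (norm := module) (4 * r ^ 2 * |sC| * sB) • hdiff
      + (4 * r ^ 2) • habs • polarUnit ((α + γ) / 2 + π / 2)
  rw [hn, inner_smul_left] at key
  refine (mul_eq_zero.mp key).resolve_left ?_
  have hC : sC ≠ 0 := right_ne_zero_of_mul hsign.ne'
  have hB : sB ≠ 0 := left_ne_zero_of_mul hsign.ne'
  simp only [conj_trivial]
  exact neg_ne_zero.mpr (by positivity)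

/-- For `α < β < γ < α + 2π`, the incenter of the inscribed triangle with vertices at angles
`α, β, γ`. -/
noncomputable def circleIncenter (O : EuclideanSpace ℝ (Fin 2)) (r α β γ : ℝ) :
    EuclideanSpace ℝ (Fin 2) :=
  O + r • (polarUnit ((α + β) / 2) - polarUnit ((α + γ) / 2) + polarUnit ((β + γ) / 2))

lemma inner_polarUnit_circleIncenter_sub_circlePt (O : EuclideanSpace ℝ (Fin 2)) (r α β γ : ℝ) :
    ⟪polarUnit ((2 * α + γ + β) / 4), circleIncenter O r α β γ - circlePt O r α⟫ = 0 ∧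
      ⟪polarUnit ((2 * γ + β + α) / 4), circleIncenter O r α β γ - circlePt O r γ⟫ = 0 := by
  constructor
  · rw [circleIncenter, circlePt_eq, show ∀ v : EuclideanSpace ℝ (Fin 2), O + r • v -
      (O + r • polarUnit α) = r • (v - polarUnit α) from fun v ↦ by module]
    simp only [inner_smul_right, inner_add_right, inner_sub_right, inner_polarUnit_polarUnit]
    rw [show (2 * α + γ + β) / 4 - (α + β) / 2 = -((2 * α + γ + β) / 4 - (α + γ) / 2) by ring,
      show (2 * α + γ + β) / 4 - (β + γ) / 2 = -((2 * α + γ + β) / 4 - α) by ring,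
      cos_neg, cos_neg]
    ring
  · rw [circleIncenter, circlePt_eq, show ∀ v : EuclideanSpace ℝ (Fin 2), O + r • v -
      (O + r • polarUnit γ) = r • (v - polarUnit γ) from fun v ↦ by module]
    simp only [inner_smul_right, inner_add_right, inner_sub_right, inner_polarUnit_polarUnit]
    rw [show (2 * γ + β + α) / 4 - (α + β) / 2 = -((2 * γ + β + α) / 4 - γ) by ring,
      show (2 * γ + β + α) / 4 - (β + γ) / 2 = -((2 * γ + β + α) / 4 - (α + γ) / 2) by ring,
      cos_neg, cos_neg]
    ring

lemma eq_circleIncenter_of_angle_eq {O X : EuclideanSpace ℝ (Fin 2)} {r α β γ : ℝ} (hr : 0 < r)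
    (hαβ : α < β) (hβγ : β < γ) (hγα : γ < α + 2 * π)
    (hα : ∠ (circlePt O r γ) (circlePt O r α) X = ∠ X (circlePt O r α) (circlePt O r β))
    (hγ : ∠ (circlePt O r β) (circlePt O r γ) X = ∠ X (circlePt O r γ) (circlePt O r α)) :
    X = circleIncenter O r α β γ := by
  have hX₁ := inner_polarUnit_sub_circlePt_eq_zero_of_angle_eq hr
    (mul_pos (sin_pos_of_pos_of_lt_pi (by linarith) (by linarith))
      (sin_pos_of_pos_of_lt_pi (by linarith) (by linarith)))
    (sin_pos_of_pos_of_lt_pi (by linarith) (by linarith)).ne' hα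
  have hX₂ := inner_polarUnit_sub_circlePt_eq_zero_of_angle_eq hr
    (mul_pos_of_neg_of_neg (sin_neg_of_neg_of_neg_pi_lt (by linarith) (by linarith))
      (sin_neg_of_neg_of_neg_pi_lt (by linarith) (by linarith)))
    (sin_pos_of_pos_of_lt_pi (by linarith) (by linarith)).ne' hγ
  obtain ⟨hI₁, hI₂⟩ := inner_polarUnit_circleIncenter_sub_circlePt O r α β γ
  refine sub_eq_zero.mp (eq_zero_of_inner_polarUnit_eq_zero (θ := (2 * α + γ + β) / 4)
    (φ := (2 * γ + β + α) / 4) ?_ ?_ ?_)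
  · rw [← sub_sub_sub_cancel_right X _ (circlePt O r α), inner_sub_right, hX₁, hI₁, sub_zero]
  · rw [← sub_sub_sub_cancel_right X _ (circlePt O r γ), inner_sub_right, hX₂, hI₂, sub_zero]
  · rw [show (2 * α + γ + β) / 4 - (2 * γ + β + α) / 4 = -((γ - α) / 4) by ring, sin_neg]
    exact neg_ne_zero.mpr (sin_pos_of_pos_of_lt_pi (by linarith) (by linarith)).ne'

lemma midpoint_circleIncenter_mem_segment {O : EuclideanSpace ℝ (Fin 2)} {r a b c d : ℝ}
    (hab : a < b) (hbc : b < c) (hcd : c < d) (hda : d < a + 2 * π) :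
    midpoint ℝ (circleIncenter O r a c d) (circleIncenter O r a b c) ∈
      segment ℝ (circlePt O r ((c + d) / 2)) (circlePt O r ((a + b) / 2)) := by
  have hsin := abs_sin_sub_le_sin_add (p := (c - a) / 4) (q := (d - b) / 4)
    (by linarith) (by linarith) (by linarith) (by linarith)
  set s := (a + b + c + d) / 4
  set p := (c - a) / 4
  set q := (d - b) / 4
  have hF : polarUnit ((c + d) / 2) =
      cos (p + q) • polarUnit s + sin (p + q) • polarUnit (s + π / 2) := by
    rw [← polarUnit_add]; congr 1; ring
  have hH : polarUnit ((a + b) / 2) =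
      cos (p + q) • polarUnit s + (-sin (p + q)) • polarUnit (s + π / 2) := by
    rw [← cos_neg, ← sin_neg, ← polarUnit_add]; congr 1; ring
  have hBC : polarUnit ((b + c) / 2) =
      cos (p - q) • polarUnit s + sin (p - q) • polarUnit (s + π / 2) := by
    rw [← polarUnit_add]; congr 1; ring
  have hAD : polarUnit ((a + d) / 2) =
      cos (p - q) • polarUnit s + (-sin (p - q)) • polarUnit (s + π / 2) := by
    rw [← cos_neg, ← sin_neg, ← polarUnit_add]; congr 1; ring
  set m := O + (r * cos (p + q)) • polarUnit s
  set w := r • polarUnit (s + π / 2)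
  have hM : midpoint ℝ (circleIncenter O r a c d) (circleIncenter O r a b c) =
      m + sin (p - q) • w := by
    rw [midpoint_eq_smul_add, invOf_eq_inv, circleIncenter, circleIncenter, hF, hH, hBC, hAD]
    module
  have hF' : circlePt O r ((c + d) / 2) = m + sin (p + q) • w := by rw [circlePt_eq, hF]; module
  have hH' : circlePt O r ((a + b) / 2) = m + (-sin (p + q)) • w := by
    rw [circlePt_eq, hH]; module
  rw [hM, hF', hH']
  exact add_smul_mem_segment_of_abs_le m w hsin

theorem stmt_13_general (O : EuclideanSpace ℝ (Fin 2)) (r a b c d : ℝ) (hr : 0 < r)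
    (hab : a < b) (hbc : b < c) (hcd : c < d) (hda : d < a + 2 * π)
    (X Z : EuclideanSpace ℝ (Fin 2))
    (hX : IsIncenter X (circlePt O r a) (circlePt O r d) (circlePt O r c))
    (hZ : IsIncenter Z (circlePt O r c) (circlePt O r b) (circlePt O r a)) :
    midpoint ℝ X Z ∈ segment ℝ (circlePt O r ((c + d) / 2)) (circlePt O r ((a + b) / 2)) := by
  rw [eq_circleIncenter_of_angle_eq hr (by linarith) hcd (by linarith) hX.1 hX.2.1,
    eq_circleIncenter_of_angle_eq hr hab hbc (by linarith) hZ.2.2 hZ.1]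
  exact midpoint_circleIncenter_mem_segment hab hbc hcd hda

/-- With `A, B, C, D` in cyclic order on a circle, `X, Y, Z, T` the incenters of triangles
`ADC, DCB, CBA, BAD`, `E` the intersection of the diagonals of rectangle `XYZT` (i.e.
the midpoint of `XZ`), and `F`, `H` the midpoints of arcs `CD` and `AB`, the point `E`
lies on the segment `FH`. -/
theorem stmt_13 (O : EuclideanSpace ℝ (Fin 2)) (r a b c d : ℝ) (hr : 0 < r)
    (hab : a < b) (hbc : b < c) (hcd : c < d) (hda : d < a + 2 * π)
    (X Y Z T : EuclideanSpace ℝ (Fin 2))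
    (hX : IsIncenter X (circlePt O r a) (circlePt O r d) (circlePt O r c))
    (hY : IsIncenter Y (circlePt O r d) (circlePt O r c) (circlePt O r b))
    (hZ : IsIncenter Z (circlePt O r c) (circlePt O r b) (circlePt O r a))
    (hT : IsIncenter T (circlePt O r b) (circlePt O r a) (circlePt O r d)) :
    midpoint ℝ X Z ∈ segment ℝ (circlePt O r ((c + d) / 2)) (circlePt O r ((a + b) / 2)) :=
  stmt_13_general O r a b c d hr hab hbc hcd hda X Z hX hZ
end

section
/- Let Γ be a circle bounding the closed disk D, and let σ₁, σ₂ be two disjoint arcs of Γ with side disks ω₁, ω₂ (each centered at its arc's midpoint, passing through its endpoints). Then the outer parts of ω₁ and ω₂ are disjoint: (ω₁ \ D) ∩ (ω₂ \ D) = ∅. -/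
open EuclideanGeometry Metric Real

lemma angle_circlePt_center_circlePt (O : EuclideanSpace ℝ (Fin 2)) {r : ℝ} (hr : 0 < r)
    (θ φ : ℝ) : ∠ (circlePt O r θ) O (circlePt O r φ) = arccos (cos (θ - φ)) := by
  rw [EuclideanGeometry.angle, circlePt, circlePt]
  simp only [vsub_eq_sub, add_sub_cancel_left]
  rw [InnerProductGeometry.angle_smul_left_of_pos _ _ hr,
    InnerProductGeometry.angle_smul_right_of_pos _ _ hr, InnerProductGeometry.angle]
  simp [EuclideanSpace.norm_eq, EuclideanSpace.inner_eq_star_dotProduct, Fin.sum_univ_two,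
    cos_sub, mul_comm]

lemma dist_circlePt_center (O : EuclideanSpace ℝ (Fin 2)) {r : ℝ} (hr : 0 ≤ r) (θ : ℝ) :
    dist (circlePt O r θ) O = r := by
  rw [dist_eq_norm, circlePt, add_sub_cancel_left, norm_smul, EuclideanSpace.norm_eq]
  simp [Fin.sum_univ_two, abs_of_nonneg hr]

lemma le_arccos_cos {w δ : ℝ} (hwδ : w ≤ δ) (hδw : δ ≤ 2 * π - w) : w ≤ arccos (cos δ) := by
  rcases le_or_gt w 0 with hw | hw
  · exact hw.trans (arccos_nonneg _)
  rcases le_total δ π with hδ | hδ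
  · rwa [arccos_cos (by linarith) hδ]
  · rw [← cos_two_pi_sub, arccos_cos (by linarith) (by linarith)]
    linarith

lemma angle_lt_of_mem_sideDisk {O X : EuclideanSpace ℝ (Fin 2)} {r a b : ℝ} (hr : 0 < r)
    (hab : a < b) (hba : b < a + 2 * π) (hX : X ∈ sideDisk O r a b) (hXO : r < dist X O) :
    ∠ X O (circlePt O r ((a + b) / 2)) < (b - a) / 2 := by
  have hw : ∠ (circlePt O r ((a + b) / 2)) O (circlePt O r a) = (b - a) / 2 := by
    rw [angle_circlePt_center_circlePt O hr, arccos_cos] <;> linarith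
  have hXM := dist_sq_eq_dist_sq_add_dist_sq_sub_two_mul_dist_mul_dist_mul_cos_angle X O
    (circlePt O r ((a + b) / 2))
  have hMP := dist_sq_eq_dist_sq_add_dist_sq_sub_two_mul_dist_mul_dist_mul_cos_angle
    (circlePt O r ((a + b) / 2)) O (circlePt O r a)
  simp only [dist_circlePt_center O hr.le, hw] at hXM hMP
  set M := circlePt O r ((a + b) / 2)
  set s := dist X O
  set α := ∠ X O M
  have hle : dist X M * dist X M ≤ dist M (circlePt O r a) * dist M (circlePt O r a) :=
    mul_self_le_mul_self dist_nonneg hX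
  have hexpand : (s - r) * (s + r - 2 * r * cos ((b - a) / 2)) ≤
      2 * r * s * (cos α - cos ((b - a) / 2)) := by
    nlinarith
  have hpos : 0 < (s - r) * (s + r - 2 * r * cos ((b - a) / 2)) := by
    have := cos_le_one ((b - a) / 2)
    exact mul_pos (by linarith) (by nlinarith)
  have hcos : cos ((b - a) / 2) < cos α :=
    sub_pos.1 (pos_of_mul_pos_right (hpos.trans_le hexpand) (by positivity))
  by_contra! hα
  exact hcos.not_ge (cos_le_cos_of_nonneg_of_le_pi (by linarith) (angle_le_pi X O M) hα)

/-- The outer parts (parts outside the closed disk `D` bounded by the circle) of the side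
disks of two disjoint arcs are disjoint. -/
theorem stmt_16 (O : EuclideanSpace ℝ (Fin 2)) (r a₁ b₁ a₂ b₂ : ℝ) (hr : 0 < r)
    (h1 : a₁ < b₁) (h2 : b₁ < a₂) (h3 : a₂ < b₂) (h4 : b₂ < a₁ + 2 * π) :
    (sideDisk O r a₁ b₁ \ Metric.closedBall O r) ∩
      (sideDisk O r a₂ b₂ \ Metric.closedBall O r) = ∅ := by
  refine Set.eq_empty_of_forall_notMem ?_
  rintro X ⟨⟨hX₁, hXD⟩, hX₂, -⟩
  rw [mem_closedBall, not_le] at hXD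
  have hα₁ := angle_lt_of_mem_sideDisk hr h1 (by linarith) hX₁ hXD
  have hα₂ := angle_lt_of_mem_sideDisk hr h3 (by linarith) hX₂ hXD
  have hsep : (b₁ - a₁) / 2 + (b₂ - a₂) / 2 ≤
      ∠ (circlePt O r ((a₂ + b₂) / 2)) O (circlePt O r ((a₁ + b₁) / 2)) := by
    rw [angle_circlePt_center_circlePt O hr]
    exact le_arccos_cos (by linarith) (by linarith)
  linarith [angle_le_angle_add_angle O (circlePt O r ((a₂ + b₂) / 2)) X
    (circlePt O r ((a₁ + b₁) / 2)), angle_comm (circlePt O r ((a₂ + b₂) / 2)) O X]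
end
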